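/- arXiv:1403.4324 — 4 statements merged into one kernel-verified Lean document; each statement's English description precedes it below -/
import Mathlib

section
/- Let Λ be a row-finite locally convex k-graph, let v ∈ Λ^0 and let E ⊆ vΛ be a finite exhaustive set. Set N := ⋁_{λ ∈ E} d(λ). Then {λν : λ ∈ E, ν ∈ s(λ)Λ^{≤N−d(λ)}} = vΛ^{≤N}. -/
/-!
A path `z ∈ vΛ^{≤N}` cannot be extended inside degree `N`: any extension `zα` with
`d(zα) ≤ N` has `d(α) = 0`, since otherwise the first edge of `α` would contradict the
maximality of `z`. Exhaustiveness gives `μ ∈ E` and `zα = μβ` of degree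
`d(z) ∨ d(μ) ≤ N`, hence `α = s(z)` and `z = μβ`; and for `d(μ) ≤ N` one has
`μβ ∈ vΛ^{≤N}` iff `β ∈ s(μ)Λ^{≤N−d(μ)}`.
-/

open scoped BigOperators NNReal ENNReal

/-- A `k`-graph: a countable small category presented on its set of morphisms,
with a range map, a source map, a (total, junk-valued on non-composable pairs)
composition, and a degree functor into `ℕ^k` satisfying the factorisation
property. -/
structure KGraph (k : ℕ) where
  M : Type
  countableM : Countable M
  nonemptyM : Nonempty M
  src : M → M
  rng : M → M
  comp : M → M → M
  deg : M → Fin k → ℕ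
  src_src : ∀ x, src (src x) = src x
  rng_src : ∀ x, rng (src x) = src x
  src_rng : ∀ x, src (rng x) = rng x
  rng_rng : ∀ x, rng (rng x) = rng x
  comp_id : ∀ x, comp x (src x) = x
  id_comp : ∀ x, comp (rng x) x = x
  src_comp : ∀ x y, src x = rng y → src (comp x y) = src y
  rng_comp : ∀ x y, src x = rng y → rng (comp x y) = rng x
  comp_assoc : ∀ x y z, src x = rng y → src y = rng z →
    comp (comp x y) z = comp x (comp y z)
  deg_src : ∀ x, deg (src x) = 0
  deg_rng : ∀ x, deg (rng x) = 0
  deg_comp : ∀ x y, src x = rng y → deg (comp x y) = deg x + deg y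
  factor : ∀ (x : M) (m n : Fin k → ℕ), deg x = m + n →
    ∃! p : M × M, src p.1 = rng p.2 ∧ comp p.1 p.2 = x ∧ deg p.1 = m ∧ deg p.2 = n

namespace KGraph

variable {k : ℕ} (Λ : KGraph k)

/-- The vertices (identity morphisms) of a `k`-graph. -/
def IsVertex (v : Λ.M) : Prop := Λ.rng v = v

/-- `Composable x y` means the composition `x ∘ y` (i.e. the path `xy`) is defined. -/
def Composable (x y : Λ.M) : Prop := Λ.src x = Λ.rng y

/-- The type of vertices of `Λ`. -/
def Vtx := {v : Λ.M // Λ.IsVertex v}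

theorem isVertex_src (x : Λ.M) : Λ.IsVertex (Λ.src x) := Λ.rng_src x

theorem isVertex_rng (x : Λ.M) : Λ.IsVertex (Λ.rng x) := Λ.rng_rng x

/-- The source of a morphism, as a vertex. -/
def srcV (x : Λ.M) : Λ.Vtx := ⟨Λ.src x, Λ.isVertex_src x⟩

/-- The set `vΛ^{≤ n}`. -/
def leSet (v : Λ.M) (n : Fin k → ℕ) : Set Λ.M :=
  {x | Λ.rng x = v ∧ Λ.deg x ≤ n ∧
    ∀ i : Fin k, Λ.deg x + Pi.single i 1 ≤ n →
      ¬∃ y, Λ.rng y = Λ.src x ∧ Λ.deg y = Pi.single i 1}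

/-- A `k`-graph is row-finite if `vΛ^n` is finite for every vertex `v` and `n ∈ ℕ^k`. -/
def RowFinite : Prop :=
  ∀ (v : Λ.M) (n : Fin k → ℕ), Λ.IsVertex v → {x | Λ.rng x = v ∧ Λ.deg x = n}.Finite

/-- A `k`-graph is locally convex if whenever `i < j`, `e ∈ Λ^{e_i}`, `f ∈ Λ^{e_j}` and
`r e = r f`, both `e` and `f` extend to paths of degree `e_i + e_j`. -/
def LocallyConvex : Prop :=
  ∀ (i j : Fin k), i < j → ∀ e f : Λ.M,
    Λ.deg e = Pi.single i 1 → Λ.deg f = Pi.single j 1 → Λ.rng e = Λ.rng f →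
    (∃ e', Λ.Composable e e' ∧ Λ.deg e' = Pi.single j 1) ∧
    (∃ f', Λ.Composable f f' ∧ Λ.deg f' = Pi.single i 1)

/-- `Λ^{min}(x,y)`: the pairs `(α, β)` with `xα = yβ` of degree `d x ⊔ d y`. -/
def MinExt (x y : Λ.M) : Set (Λ.M × Λ.M) :=
  {p | Λ.Composable x p.1 ∧ Λ.Composable y p.2 ∧
    Λ.comp x p.1 = Λ.comp y p.2 ∧ Λ.deg (Λ.comp x p.1) = Λ.deg x ⊔ Λ.deg y}

/-- A subset `E ⊆ vΛ` is exhaustive if every `x ∈ vΛ` has a minimal common extension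
with some element of `E`. -/
def Exhaustive (v : Λ.M) (E : Set Λ.M) : Prop :=
  ∀ x, Λ.rng x = v → ∃ μ ∈ E, (Λ.MinExt x μ).Nonempty

/-- A graph trace on `Λ`. -/
def IsGraphTrace (g : Λ.Vtx → ℝ≥0) : Prop :=
  ∀ (v : Λ.Vtx) (n : Fin k → ℕ), g v = ∑ᶠ x ∈ Λ.leSet v.1 n, g (Λ.srcV x)

/-- A `𝕋`-valued `2`-cocycle on `Λ`, presented as a `ℂ`-valued function that is
unimodular on composable pairs. -/
def IsTCocycle (c : Λ.M → Λ.M → ℂ) : Prop :=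
  (∀ x y, Λ.Composable x y → ‖c x y‖ = 1) ∧
  (∀ x y, Λ.IsVertex x ∨ Λ.IsVertex y → c x y = 1) ∧
  (∀ x y z, Λ.Composable x y → Λ.Composable y z →
    c x y * c (Λ.comp x y) z = c y z * c x (Λ.comp y z))

/-- A Cuntz–Krieger `(Λ, c)`-family in a `C*`-algebra `B`: relations (CK1)–(CK4). -/
def IsCKFamily {B : Type*} [NonUnitalCStarAlgebra B] [NormedSpace ℂ B]
    (c : Λ.M → Λ.M → ℂ) (s : Λ.M → B) : Prop :=
  (∀ v, Λ.IsVertex v → star (s v) = s v ∧ s v * s v = s v) ∧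
  (∀ v w, Λ.IsVertex v → Λ.IsVertex w → v ≠ w → s v * s w = 0) ∧
  (∀ x y, Λ.Composable x y → s x * s y = c x y • s (Λ.comp x y)) ∧
  (∀ x, star (s x) * s x = s (Λ.src x)) ∧
  (∀ (v : Λ.M) (n : Fin k → ℕ), Λ.IsVertex v →
    s v = ∑ᶠ x ∈ Λ.leSet v n, s x * star (s x))

end KGraph

theorem Pi.single_one_le_of_ne_zero {ι : Type*} [DecidableEq ι] {d : ι → ℕ} {i : ι}
    (hi : d i ≠ 0) : Pi.single i 1 ≤ d := fun j => by
  rcases eq_or_ne j i with rfl | hj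
  · simpa [Nat.one_le_iff_ne_zero] using hi
  · simp [Pi.single_eq_of_ne hj]

namespace KGraph

variable {k : ℕ} (Λ : KGraph k)

theorem isVertex_of_deg_eq_zero {α : Λ.M} (hα : Λ.deg α = 0) : Λ.IsVertex α := by
  obtain ⟨_, -, huniq⟩ := Λ.factor α 0 0 (by rw [hα, add_zero])
  have hrng := huniq (Λ.rng α, α) ⟨Λ.src_rng α, Λ.id_comp α, Λ.deg_rng α, hα⟩
  have hsrc := huniq (α, Λ.src α) ⟨(Λ.rng_src α).symm, Λ.comp_id α, hα, Λ.deg_src α⟩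
  exact congrArg Prod.fst (hrng.trans hsrc.symm)

theorem eq_src_of_composable_of_deg_eq_zero {z α : Λ.M} (hzα : Λ.Composable z α)
    (hα : Λ.deg α = 0) : α = Λ.src z :=
  (Λ.isVertex_of_deg_eq_zero hα).symm.trans hzα.symm

theorem exists_edge_of_deg_ne_zero {α : Λ.M} {i : Fin k} (hi : Λ.deg α i ≠ 0) :
    ∃ e, Λ.rng e = Λ.rng α ∧ Λ.deg e = Pi.single i 1 := by
  obtain ⟨⟨e, α'⟩, ⟨heα', hcomp, hdeg, -⟩, -⟩ :=
    Λ.factor α _ _ (add_tsub_cancel_of_le (Pi.single_one_le_of_ne_zero hi)).symm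
  exact ⟨e, by rw [← hcomp, Λ.rng_comp e α' heα'], hdeg⟩

theorem eq_src_of_mem_leSet {v z α : Λ.M} {n : Fin k → ℕ} (hz : z ∈ Λ.leSet v n)
    (hzα : Λ.Composable z α) (hdeg : Λ.deg z + Λ.deg α ≤ n) : α = Λ.src z := by
  refine Λ.eq_src_of_composable_of_deg_eq_zero hzα ?_
  by_contra hα
  obtain ⟨i, hi⟩ := Function.ne_iff.1 hα
  obtain ⟨e, hre, hde⟩ := Λ.exists_edge_of_deg_ne_zero hi
  have hei : Λ.deg z + Pi.single i 1 ≤ n := by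
    grw [Pi.single_one_le_of_ne_zero hi]
    exact hdeg
  exact hz.2.2 i hei ⟨e, hre.trans hzα.symm, hde⟩

theorem comp_mem_leSet_iff {v x ν : Λ.M} {n : Fin k → ℕ} (hxν : Λ.Composable x ν)
    (hx : Λ.rng x = v) (hxn : Λ.deg x ≤ n) :
    Λ.comp x ν ∈ Λ.leSet v n ↔ ν ∈ Λ.leSet (Λ.src x) (n - Λ.deg x) := by
  simp only [leSet, Set.mem_ofPred_eq, Λ.rng_comp x ν hxν, Λ.src_comp x ν hxν,
    Λ.deg_comp x ν hxν, hx, add_assoc, le_tsub_iff_left hxn, true_and]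
  exact ⟨fun h => ⟨hxν.symm, h⟩, fun h => h.2⟩

end KGraph

open KGraph in
theorem exhaustive_extensions_eq_leSet_general {k : ℕ} (Λ : KGraph k)
    (v : Λ.M) (E : Finset Λ.M)
    (hE : ↑E ⊆ {x | Λ.rng x = v}) (hex : Λ.Exhaustive v ↑E) :
    {z : Λ.M | ∃ x ∈ E, ∃ ν, Λ.Composable x ν ∧
        ν ∈ Λ.leSet (Λ.src x) (E.sup Λ.deg - Λ.deg x) ∧ z = Λ.comp x ν} =
      Λ.leSet v (E.sup Λ.deg) := by
  ext z
  constructor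
  · rintro ⟨x, hx, ν, hxν, hν, rfl⟩
    exact (Λ.comp_mem_leSet_iff hxν (hE hx) (E.le_sup hx)).2 hν
  · intro hz
    obtain ⟨μ, hμ, ⟨α, β⟩, hzα, hμβ, hcomm, hdeg⟩ := hex z hz.1
    have hα : α = Λ.src z := Λ.eq_src_of_mem_leSet hz hzα <| by
      rw [← Λ.deg_comp z α hzα, hdeg]
      exact sup_le hz.2.1 (E.le_sup hμ)
    have hzμβ : z = Λ.comp μ β := by rw [← hcomm, hα, Λ.comp_id]
    refine ⟨μ, hμ, β, hμβ, ?_, hzμβ⟩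
    rw [← Λ.comp_mem_leSet_iff hμβ (hE hμ) (E.le_sup hμ), ← hzμβ]
    exact hz

open KGraph in
/-- In a row-finite locally convex `k`-graph, if `E ⊆ vΛ` is a finite
exhaustive set and `N := ⋁_{x ∈ E} d x`, then
`{xν : x ∈ E, ν ∈ s(x)Λ^{≤ N − d x}} = vΛ^{≤N}`. -/
theorem exhaustive_extensions_eq_leSet {k : ℕ} (Λ : KGraph k)
    (hrf : Λ.RowFinite) (hlc : Λ.LocallyConvex)
    (v : Λ.M) (hv : Λ.IsVertex v) (E : Finset Λ.M)
    (hE : ↑E ⊆ {x | Λ.rng x = v}) (hex : Λ.Exhaustive v ↑E) :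
    {z : Λ.M | ∃ x ∈ E, ∃ ν, Λ.Composable x ν ∧
        ν ∈ Λ.leSet (Λ.src x) (E.sup Λ.deg - Λ.deg x) ∧ z = Λ.comp x ν} =
      Λ.leSet v (E.sup Λ.deg) :=
  exhaustive_extensions_eq_leSet_general Λ v E hE hex
end

section
/- Let Λ = lim(Λ_n, p_n) be the (k+1)-graph associated to a covering sequence of k-graphs and let A be an abelian group. Then the projection π : Λ → Λ_1 is a functor (in particular π(λμ) = π(λ)π(μ) for all composable λ, μ ∈ Λ, and π maps identities to identities), and for every c ∈ Z²(Λ_1, A) the formula π_*c(λ,μ) := c(π(λ), π(μ)) defines an element π_*c ∈ Z²(Λ, A); moreover c ↦ π_*c is a group homomorphism from Z²(Λ_1, A) to Z²(Λ, A). -/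
open scoped BigOperators NNReal ENNReal

attribute [local instance] Classical.propDecidable

namespace KGraph

variable {k : ℕ}

/-- An `A`-valued (categorical) `2`-cocycle on a `k`-graph, encoded as a total
function that vanishes on non-composable pairs and on pairs involving an
identity morphism, and satisfies the cocycle identity on composable triples. -/
def IsCocycle2 (Λ : KGraph k) {A : Type*} [AddCommGroup A] (c : Λ.M → Λ.M → A) : Prop :=
  (∀ x y, ¬Λ.Composable x y → c x y = 0) ∧
  (∀ x y, Λ.IsVertex x ∨ Λ.IsVertex y → c x y = 0) ∧
  (∀ x y z, Λ.Composable x y → Λ.Composable y z →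
    c x y + c (Λ.comp x y) z = c y z + c x (Λ.comp y z))

/-- The group `Z²(Λ, A)` of `A`-valued `2`-cocycles on `Λ`. -/
def Z2 (Λ : KGraph k) (A : Type*) [AddCommGroup A] : AddSubgroup (Λ.M → Λ.M → A) where
  carrier := {c | Λ.IsCocycle2 c}
  zero_mem' := by
    refine ⟨fun _ _ _ => rfl, fun _ _ _ => rfl, fun _ _ _ _ _ => rfl⟩
  add_mem' := by
    rintro c d ⟨hc1, hc2, hc3⟩ ⟨hd1, hd2, hd3⟩
    refine ⟨fun x y h => ?_, fun x y h => ?_, fun x y z h1 h2 => ?_⟩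
    · simp [hc1 x y h, hd1 x y h]
    · simp [hc2 x y h, hd2 x y h]
    · simp only [Pi.add_apply]
      rw [add_add_add_comm, hc3 x y z h1 h2, hd3 x y z h1 h2, add_add_add_comm]
  neg_mem' := by
    rintro c ⟨hc1, hc2, hc3⟩
    refine ⟨fun x y h => ?_, fun x y h => ?_, fun x y z h1 h2 => ?_⟩
    · simp [hc1 x y h]
    · simp [hc2 x y h]
    · simp only [Pi.neg_apply]
      rw [← neg_add, ← neg_add, hc3 x y z h1 h2]

/-- A `1`-cochain: a function on morphisms vanishing on the identity morphisms. -/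
def IsCochain1 (Λ : KGraph k) {A : Type*} [AddCommGroup A] (b : Λ.M → A) : Prop :=
  ∀ v, Λ.IsVertex v → b v = 0

/-- The coboundary `δ¹ b` of a `1`-cochain `b`. -/
noncomputable def delta1 (Λ : KGraph k) {A : Type*} [AddCommGroup A] (b : Λ.M → A) :
    Λ.M → Λ.M → A :=
  fun x y => if Λ.Composable x y then b x + b y - b (Λ.comp x y) else 0

/-- The group `B²(Λ, A)` of `A`-valued `2`-coboundaries on `Λ`. -/
noncomputable def B2 (Λ : KGraph k) (A : Type*) [AddCommGroup A] :
    AddSubgroup (Λ.M → Λ.M → A) where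
  carrier := {c | ∃ b, Λ.IsCochain1 b ∧ c = Λ.delta1 b}
  zero_mem' := ⟨0, fun _ _ => rfl, by
    funext x y
    simp [delta1]⟩
  add_mem' := by
    rintro c d ⟨b, hb, rfl⟩ ⟨b', hb', rfl⟩
    refine ⟨b + b', fun v hv => by simp [hb v hv, hb' v hv], ?_⟩
    funext x y
    simp only [Pi.add_apply, delta1]
    split <;> [abel; simp]
  neg_mem' := by
    rintro c ⟨b, hb, rfl⟩
    refine ⟨-b, fun v hv => by simp [hb v hv], ?_⟩
    funext x y
    simp only [Pi.neg_apply, delta1]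
    split <;> [abel; simp]

/-- The second (categorical) cohomology group `H²(Λ, A) = Z²(Λ,A)/B²(Λ,A)`. -/
noncomputable def H2 (Λ : KGraph k) (A : Type*) [AddCommGroup A] :=
  Z2 Λ A ⧸ (B2 Λ A).addSubgroupOf (Z2 Λ A)

noncomputable instance (Λ : KGraph k) (A : Type*) [AddCommGroup A] :
    AddCommGroup (H2 Λ A) := by
  unfold H2; infer_instance

/-- A covering of `k`-graphs: a surjective degree-preserving functor that restricts to
bijections `Γv → Λ p(v)` and `vΓ → p(v)Λ` on every vertex `v`. -/
def IsKGraphCovering (Γ Λ : KGraph k) (p : Γ.M → Λ.M) : Prop :=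
  Function.Surjective p ∧
  (∀ x, Λ.src (p x) = p (Γ.src x)) ∧
  (∀ x, Λ.rng (p x) = p (Γ.rng x)) ∧
  (∀ x, Λ.deg (p x) = Γ.deg x) ∧
  (∀ x y, Γ.Composable x y → p (Γ.comp x y) = Λ.comp (p x) (p y)) ∧
  (∀ v, Γ.IsVertex v → Set.BijOn p {x | Γ.src x = v} {y | Λ.src y = p v}) ∧
  (∀ v, Γ.IsVertex v → Set.BijOn p {x | Γ.rng x = v} {y | Λ.rng y = p v})

end KGraph

open KGraph

/-- The `(k+1)`-graph `Λ = lim (Λ_n, p_n)` associated to a covering sequence of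
`k`-graphs, together with all its defining data: `L n` is the `k`-graph `Λ_{n+1}`
(so `L 0 = Λ₁`), `p n : Λ_{n+2} → Λ_{n+1}` are the coverings, `Lam` is the limit
`(k+1)`-graph, `ι n : Λ_{n+1} → Λ` are the injective functors, and `edge` is the
bijection of `⨆_{n ≥ 2} Λ_n^0` onto `Λ^{e_{k+1}}`, subject to the characterising
properties (1)–(5). -/
structure CovSeqLimit (k : ℕ) where
  L : ℕ → KGraph k
  p : ∀ n, (L (n + 1)).M → (L n).M
  p_cov : ∀ n, IsKGraphCovering (L (n + 1)) (L n) (p n)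
  Lam : KGraph (k + 1)
  ι : ∀ n, (L n).M → Lam.M
  ι_inj : ∀ n, Function.Injective (ι n)
  ι_src : ∀ n x, Lam.src (ι n x) = ι n ((L n).src x)
  ι_rng : ∀ n x, Lam.rng (ι n x) = ι n ((L n).rng x)
  ι_comp : ∀ n x y, (L n).Composable x y →
    Lam.comp (ι n x) (ι n y) = ι n ((L n).comp x y)
  ι_deg : ∀ n x, Lam.deg (ι n x) = Fin.snoc ((L n).deg x) 0
  ι_disjoint : ∀ m n x y, ι m x = ι n y → m = n
  ι_union : ∀ z : Lam.M, Lam.deg z (Fin.last k) = 0 → ∃ n x, ι n x = z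
  edge : (Σ n : ℕ, (L (n + 1)).M) → Lam.M
  edge_deg : ∀ q : Σ n, (L (n + 1)).M, (L (q.1 + 1)).IsVertex q.2 →
    Lam.deg (edge q) = Fin.snoc (fun _ : Fin k => 0) 1
  edge_injOn : Set.InjOn edge {q | (L (q.1 + 1)).IsVertex q.2}
  edge_surj : ∀ z : Lam.M, Lam.deg z = Fin.snoc (fun _ : Fin k => 0) 1 →
    ∃ q, (L (q.1 + 1)).IsVertex q.2 ∧ edge q = z
  edge_src : ∀ (n) (v : (L (n + 1)).M), (L (n + 1)).IsVertex v →
    Lam.src (edge ⟨n, v⟩) = ι (n + 1) v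
  edge_rng : ∀ (n) (v : (L (n + 1)).M), (L (n + 1)).IsVertex v →
    Lam.rng (edge ⟨n, v⟩) = ι n (p n v)
  edge_comm : ∀ (n) (x : (L (n + 1)).M),
    Lam.comp (edge ⟨n, (L (n + 1)).rng x⟩) (ι (n + 1) x) =
      Lam.comp (ι n (p n x)) (edge ⟨n, (L (n + 1)).src x⟩)

namespace CovSeqLimit

variable {k : ℕ} (C : CovSeqLimit k)

/-- The iterated covering maps `p_{1,n} : Λ_n → Λ_1`. -/
def pIter : ∀ n, (C.L n).M → (C.L 0).M
  | 0 => id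
  | n + 1 => pIter n ∘ C.p n

/-- A degree `d ∈ ℕ^{k+1}` lies in `ℕ e_{k+1}` iff its first `k` coordinates vanish. -/
def OnlyLast {k : ℕ} (d : Fin (k + 1) → ℕ) : Prop :=
  ∀ i : Fin k, d i.castSucc = 0

/-- The hypothesis that `ξ` assigns to each vertex `v` of `Λ` the path
`ξ_v ∈ Λ_1^0 Λ^{ℕ e_{k+1}} v`. -/
def IsXi (ξ : C.Lam.M → C.Lam.M) : Prop :=
  ∀ v, C.Lam.IsVertex v → C.Lam.src (ξ v) = v ∧ OnlyLast (C.Lam.deg (ξ v)) ∧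
    ∃ w, (C.L 0).IsVertex w ∧ C.Lam.rng (ξ v) = C.ι 0 w

/-- The hypothesis that `π : Λ → Λ₁` is the projection determined by the unique
factorisation `ξ_{r λ} λ = π(λ) β` with `π(λ) ∈ Λ₁` and `β ∈ Λ^{ℕ e_{k+1}}`. -/
def IsProjOnto (ξ : C.Lam.M → C.Lam.M) (π : C.Lam.M → (C.L 0).M) : Prop :=
  ∀ x, ∃ β, OnlyLast (C.Lam.deg β) ∧ C.Lam.Composable (C.ι 0 (π x)) β ∧
    C.Lam.comp (ξ (C.Lam.rng x)) x = C.Lam.comp (C.ι 0 (π x)) β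

/-- The map `π_* : Z²(Λ₁, A) → Z²(Λ, A)`, `π_* c (λ, μ) = c(π λ, π μ)`. -/
noncomputable def pfwd {A : Type*} [AddCommGroup A] (π : C.Lam.M → (C.L 0).M)
    (c : (C.L 0).M → (C.L 0).M → A) : C.Lam.M → C.Lam.M → A :=
  fun x y => if C.Lam.Composable x y then c (π x) (π y) else 0

/-- The restriction map `Z²(Λ, A) → Z²(Λ₁, A)`, `c ↦ c|_{Λ₁}`. -/
def res {A : Type*} [AddCommGroup A] (c : C.Lam.M → C.Lam.M → A) :
    (C.L 0).M → (C.L 0).M → A :=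
  fun x y => c (C.ι 0 x) (C.ι 0 y)

end CovSeqLimit

/-!
Paths of degree in `ℕ e_{k+1}` are rigid: every vertex of `Λ_{n+1}` is the source of exactly one
edge of degree `e_{k+1}`, and that edge ends in `Λ_n`, so a vertical path from a vertex of
`Λ_{n+1}` down to `Λ_1` has length `n` and is determined by its source. Hence in
`ξ_{r(λ)} λ μ = π(λ) β μ` the path `β` must be `ξ_{r(μ)}`, which rewrites the left side as
`π(λ) π(μ) γ`; uniqueness of factorisations then gives `π(λμ) = π(λ) π(μ)`. A functor pulls
cocycles back to cocycles.
-/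

theorem Fin.snoc_add_snoc {n : ℕ} {α : Type*} [Add α] (a b : Fin n → α) (x y : α) :
    (Fin.snoc a x : Fin (n + 1) → α) + Fin.snoc b y = Fin.snoc (a + b) (x + y) := by
  funext i
  refine Fin.lastCases ?_ (fun j => ?_) i <;> simp

namespace KGraph

section Basic

variable {k : ℕ} (Λ : KGraph k)

theorem isVertex_of_deg_eq_zero_s3 {x : Λ.M} (h : Λ.deg x = 0) : Λ.IsVertex x := by
  have hfac := Λ.factor x 0 0 (by simpa using h)
  have := hfac.unique (y₁ := (Λ.rng x, x)) (y₂ := (x, Λ.src x))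
    ⟨Λ.src_rng x, Λ.id_comp x, Λ.deg_rng x, h⟩ ⟨(Λ.rng_src x).symm, Λ.comp_id x, h, Λ.deg_src x⟩
  exact (Prod.ext_iff.mp this).1

theorem src_eq_self_of_isVertex {v : Λ.M} (hv : Λ.IsVertex v) : Λ.src v = v := by
  rw [← hv, Λ.src_rng]

variable {Λ}

theorem composable_comp_left {x y z : Λ.M} (hxy : Λ.Composable x y) (hyz : Λ.Composable y z) :
    Λ.Composable (Λ.comp x y) z :=
  (Λ.src_comp x y hxy).trans hyz

theorem composable_comp_right {x y z : Λ.M} (hxy : Λ.Composable x y) (hyz : Λ.Composable y z) :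
    Λ.Composable x (Λ.comp y z) :=
  hxy.trans (Λ.rng_comp y z hyz).symm

end Basic

structure IsFunctor {k l : ℕ} (Γ : KGraph k) (Λ : KGraph l) (f : Γ.M → Λ.M) : Prop where
  composable : ∀ {x y}, Γ.Composable x y → Λ.Composable (f x) (f y)
  map_comp : ∀ {x y}, Γ.Composable x y → f (Γ.comp x y) = Λ.comp (f x) (f y)
  isVertex : ∀ {v}, Γ.IsVertex v → Λ.IsVertex (f v)

theorem IsFunctor.isCocycle2_comap {k l : ℕ} {Γ : KGraph k} {Λ : KGraph l} {f : Γ.M → Λ.M}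
    (hf : IsFunctor Γ Λ f) {A : Type*} [AddCommGroup A] {c : Λ.M → Λ.M → A}
    (hc : Λ.IsCocycle2 c) :
    Γ.IsCocycle2 (fun x y => if Γ.Composable x y then c (f x) (f y) else 0) := by
  obtain ⟨-, hc_vertex, hc_cocycle⟩ := hc
  refine ⟨fun x y h => if_neg h, fun x y h => ?_, fun x y z hxy hyz => ?_⟩
  · dsimp only
    split_ifs
    · exact hc_vertex _ _ (h.imp hf.isVertex hf.isVertex)
    · rfl
  · simp only [if_pos hxy, if_pos hyz, if_pos (composable_comp_left hxy hyz),
      if_pos (composable_comp_right hxy hyz), hf.map_comp hxy, hf.map_comp hyz]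
    exact hc_cocycle _ _ _ (hf.composable hxy) (hf.composable hyz)

end KGraph

namespace CovSeqLimit

variable {k : ℕ} (C : CovSeqLimit k)

def vertical (k m : ℕ) : Fin (k + 1) → ℕ := Fin.snoc (fun _ : Fin k => 0) m

theorem vertical_zero : vertical k 0 = 0 := by
  funext i
  refine Fin.lastCases ?_ (fun j => ?_) i <;> simp [vertical]

theorem vertical_succ (m : ℕ) : vertical k (m + 1) = vertical k m + vertical k 1 := by
  rw [vertical, vertical, vertical, Fin.snoc_add_snoc]; rfl

theorem onlyLast_iff {d : Fin (k + 1) → ℕ} : OnlyLast d ↔ d = vertical k (d (Fin.last k)) := by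
  conv_rhs => lhs; rw [← Fin.snoc_init_self d]
  rw [vertical, Fin.snoc_inj]
  simp [OnlyLast, funext_iff, Fin.init]

theorem exists_ι_eq_src (x : C.Lam.M) : ∃ n w, C.ι n w = C.Lam.src x :=
  C.ι_union _ (by rw [C.Lam.deg_src]; rfl)

theorem composable_ι_iff {n : ℕ} {a b : (C.L n).M} :
    C.Lam.Composable (C.ι n a) (C.ι n b) ↔ (C.L n).Composable a b := by
  rw [KGraph.Composable, KGraph.Composable, C.ι_src, C.ι_rng, (C.ι_inj n).eq_iff]

theorem edge_eq_of_src_eq {e e' : C.Lam.M} (he : C.Lam.deg e = vertical k 1)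
    (he' : C.Lam.deg e' = vertical k 1) (hs : C.Lam.src e = C.Lam.src e') :
    e = e' := by
  obtain ⟨⟨n, w⟩, hw, rfl⟩ := C.edge_surj e he
  obtain ⟨⟨n', w'⟩, hw', rfl⟩ := C.edge_surj e' he'
  rw [C.edge_src n w hw, C.edge_src n' w' hw'] at hs
  obtain rfl : n = n' := Nat.succ_injective (C.ι_disjoint _ _ _ _ hs)
  rw [C.ι_inj _ hs]

theorem eq_of_src_eq_of_deg_eq_vertical :
    ∀ (m : ℕ) {β β' : C.Lam.M}, C.Lam.deg β = vertical k m →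
      C.Lam.deg β' = vertical k m → C.Lam.src β = C.Lam.src β' → β = β'
  | 0, β, β', hβ, hβ', hs => by
    have hv : ∀ {γ : C.Lam.M}, C.Lam.deg γ = vertical k 0 → C.Lam.src γ = γ := fun h =>
      C.Lam.src_eq_self_of_isVertex (C.Lam.isVertex_of_deg_eq_zero_s3 (h.trans vertical_zero))
    rwa [hv hβ, hv hβ'] at hs
  | m + 1, β, β', hβ, hβ', hs => by
    obtain ⟨⟨γ, e⟩, ⟨hc, rfl, hγ, he⟩, -⟩ := C.Lam.factor β _ _ (hβ.trans (vertical_succ m))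
    obtain ⟨⟨γ', e'⟩, ⟨hc', rfl, hγ', he'⟩, -⟩ := C.Lam.factor β' _ _ (hβ'.trans (vertical_succ m))
    rw [C.Lam.src_comp _ _ hc, C.Lam.src_comp _ _ hc'] at hs
    obtain rfl := C.edge_eq_of_src_eq he he' hs
    rw [eq_of_src_eq_of_deg_eq_vertical m hγ hγ' (hc.trans hc'.symm)]

theorem length_eq_level_of_deg_eq_vertical :
    ∀ (m : ℕ) {β : C.Lam.M} {n : ℕ} {w : (C.L n).M} {u : (C.L 0).M},
      C.Lam.deg β = vertical k m →
      C.Lam.src β = C.ι n w → C.Lam.rng β = C.ι 0 u → m = n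
  | 0, β, n, w, u, hβ, hs, hr => by
    have hv := C.Lam.isVertex_of_deg_eq_zero_s3 (hβ.trans vertical_zero)
    rw [C.Lam.src_eq_self_of_isVertex hv] at hs
    rw [hv, hs] at hr
    exact (C.ι_disjoint _ _ _ _ hr).symm
  | m + 1, β, n, w, u, hβ, hs, hr => by
    obtain ⟨⟨γ, e⟩, ⟨hc, rfl, hγ, he⟩, -⟩ := C.Lam.factor β _ _ (hβ.trans (vertical_succ m))
    obtain ⟨⟨n', w'⟩, hw', rfl⟩ := C.edge_surj e he
    rw [C.Lam.src_comp _ _ hc, C.edge_src n' w' hw'] at hs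
    rw [C.Lam.rng_comp _ _ hc] at hr
    have hγs : C.Lam.src γ = C.ι n' (C.p n' w') := hc.trans (C.edge_rng n' w' hw')
    rw [length_eq_level_of_deg_eq_vertical m hγ hγs hr, C.ι_disjoint _ _ _ _ hs]

theorem eq_of_onlyLast_of_src_eq {β β' : C.Lam.M} (hβ : OnlyLast (C.Lam.deg β))
    (hβ' : OnlyLast (C.Lam.deg β')) (hs : C.Lam.src β = C.Lam.src β') {u u' : (C.L 0).M}
    (hr : C.Lam.rng β = C.ι 0 u) (hr' : C.Lam.rng β' = C.ι 0 u') : β = β' := by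
  rw [onlyLast_iff] at hβ hβ'
  obtain ⟨n, w, hw⟩ := C.exists_ι_eq_src β
  have hm := C.length_eq_level_of_deg_eq_vertical _ hβ hw.symm hr
  have hm' := C.length_eq_level_of_deg_eq_vertical _ hβ' (hw.trans hs).symm hr'
  exact C.eq_of_src_eq_of_deg_eq_vertical n (hm ▸ hβ) (hm' ▸ hβ') hs

theorem eq_of_ι_comp_eq {n : ℕ} {a a' : (C.L n).M} {β β' : C.Lam.M}
    (hβ : OnlyLast (C.Lam.deg β)) (hβ' : OnlyLast (C.Lam.deg β'))
    (hc : C.Lam.Composable (C.ι n a) β) (hc' : C.Lam.Composable (C.ι n a') β')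
    (h : C.Lam.comp (C.ι n a) β = C.Lam.comp (C.ι n a') β') : a = a' := by
  have hdeg := congrArg C.Lam.deg h
  rw [C.Lam.deg_comp _ _ hc, C.Lam.deg_comp _ _ hc', C.ι_deg, C.ι_deg, onlyLast_iff.mp hβ,
    onlyLast_iff.mp hβ', vertical, vertical, Fin.snoc_add_snoc, Fin.snoc_add_snoc,
    Fin.snoc_inj] at hdeg
  obtain ⟨hdeg_a, hdeg_β⟩ : (C.L n).deg a' = (C.L n).deg a ∧
      C.Lam.deg β' (Fin.last k) = C.Lam.deg β (Fin.last k) := by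
    simpa [eq_comm] using hdeg
  have hfac := C.Lam.factor _ _ _ (C.Lam.deg_comp _ _ hc)
  have := hfac.unique (y₁ := (C.ι n a, β)) (y₂ := (C.ι n a', β')) ⟨hc, rfl, rfl, rfl⟩
    ⟨hc', h.symm, by rw [C.ι_deg, C.ι_deg, hdeg_a],
      by rw [onlyLast_iff.mp hβ, onlyLast_iff.mp hβ', hdeg_β]⟩
  exact C.ι_inj n (Prod.ext_iff.mp this).1

section Projection

variable {ξ : C.Lam.M → C.Lam.M} {π : C.Lam.M → (C.L 0).M}

theorem proj_eq_of_comp_eq (hπ : C.IsProjOnto ξ π) {x β : C.Lam.M} {a : (C.L 0).M}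
    (hβ : OnlyLast (C.Lam.deg β)) (hc : C.Lam.Composable (C.ι 0 a) β)
    (h : C.Lam.comp (ξ (C.Lam.rng x)) x = C.Lam.comp (C.ι 0 a) β) : π x = a := by
  obtain ⟨γ, hγ, hcγ, hx⟩ := hπ x
  exact C.eq_of_ι_comp_eq hγ hβ hcγ hc (hx.symm.trans h)

theorem proj_isVertex (hξ : C.IsXi ξ) (hπ : C.IsProjOnto ξ π) {v : C.Lam.M}
    (hv : C.Lam.IsVertex v) : (C.L 0).IsVertex (π v) := by
  obtain ⟨hs, hol, w, hw, hr⟩ := hξ v hv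
  have hc : C.Lam.Composable (C.ι 0 w) (ξ v) := by
    rw [KGraph.Composable, C.ι_src, (C.L 0).src_eq_self_of_isVertex hw, hr]
  refine C.proj_eq_of_comp_eq hπ hol hc ?_ ▸ hw
  calc C.Lam.comp (ξ (C.Lam.rng v)) v = C.Lam.comp (ξ v) (C.Lam.src (ξ v)) := by rw [hv, hs]
    _ = C.Lam.comp (C.Lam.rng (ξ v)) (ξ v) := by rw [C.Lam.comp_id, C.Lam.id_comp]
    _ = C.Lam.comp (C.ι 0 w) (ξ v) := by rw [hr]

theorem proj_comp (hξ : C.IsXi ξ) (hπ : C.IsProjOnto ξ π) {x y : C.Lam.M}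
    (hxy : C.Lam.Composable x y) :
    (C.L 0).Composable (π x) (π y) ∧ π (C.Lam.comp x y) = (C.L 0).comp (π x) (π y) := by
  obtain ⟨β, hβ, hcβ, hx⟩ := hπ x
  obtain ⟨γ, hγ, hcγ, hy⟩ := hπ y
  obtain ⟨hsξ, hξ_ol, w, -, hrξ⟩ := hξ (C.Lam.rng y) (C.Lam.isVertex_rng y)
  have hξx : C.Lam.Composable (ξ (C.Lam.rng x)) x := (hξ _ (C.Lam.isVertex_rng x)).1
  have hsβ : C.Lam.src β = C.Lam.rng y := by
    rw [← C.Lam.src_comp _ _ hcβ, ← hx, C.Lam.src_comp _ _ hξx]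
    exact hxy
  have hβξ : β = ξ (C.Lam.rng y) :=
    C.eq_of_onlyLast_of_src_eq hβ hξ_ol (hsβ.trans hsξ.symm)
      (hcβ.symm.trans (C.ι_src 0 (π x))) hrξ
  have hβy : C.Lam.comp β y = C.Lam.comp (C.ι 0 (π y)) γ := by rw [hβξ, hy]
  have hιc : C.Lam.Composable (C.ι 0 (π x)) (C.ι 0 (π y)) := by
    rw [KGraph.Composable, hcβ, ← C.Lam.rng_comp β y hsβ, hβy, C.Lam.rng_comp _ _ hcγ]
  have hc : (C.L 0).Composable (π x) (π y) := C.composable_ι_iff.mp hιc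
  refine ⟨hc, C.proj_eq_of_comp_eq hπ hγ ?_ ?_⟩
  · rw [KGraph.Composable, C.ι_src, (C.L 0).src_comp _ _ hc, ← C.ι_src]
    exact hcγ
  · calc C.Lam.comp (ξ (C.Lam.rng (C.Lam.comp x y))) (C.Lam.comp x y)
        = C.Lam.comp (C.Lam.comp (ξ (C.Lam.rng x)) x) y := by
          rw [C.Lam.rng_comp _ _ hxy, C.Lam.comp_assoc _ _ _ hξx hxy]
      _ = C.Lam.comp (C.ι 0 (π x)) (C.Lam.comp (C.ι 0 (π y)) γ) := by
          rw [hx, C.Lam.comp_assoc _ _ _ hcβ hsβ, hβy]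
      _ = C.Lam.comp (C.ι 0 ((C.L 0).comp (π x) (π y))) γ := by
          rw [← C.Lam.comp_assoc _ _ _ hιc hcγ, C.ι_comp 0 _ _ hc]

theorem isFunctor_proj (hξ : C.IsXi ξ) (hπ : C.IsProjOnto ξ π) : IsFunctor C.Lam (C.L 0) π where
  composable h := (C.proj_comp hξ hπ h).1
  map_comp h := (C.proj_comp hξ hπ h).2
  isVertex := C.proj_isVertex hξ hπ

end Projection

theorem pfwd_add {A : Type*} [AddCommGroup A] (π : C.Lam.M → (C.L 0).M)
    (c c' : (C.L 0).M → (C.L 0).M → A) : C.pfwd π (c + c') = C.pfwd π c + C.pfwd π c' := by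
  funext x y
  by_cases h : C.Lam.Composable x y <;> simp [pfwd, h]

end CovSeqLimit

open KGraph in
/-- For the `(k+1)`-graph `Λ = lim (Λ_n, p_n)` of a covering sequence,
the projection `π : Λ → Λ₁` is a functor, and `π_* c (λ,μ) = c (π λ, π μ)` defines a
group homomorphism `π_* : Z²(Λ₁, A) → Z²(Λ, A)`. -/
theorem proj_functor_and_pfwd_hom {k : ℕ} (C : CovSeqLimit k)
    (A : Type*) [AddCommGroup A]
    (ξ : C.Lam.M → C.Lam.M) (hξ : C.IsXi ξ)
    (π : C.Lam.M → (C.L 0).M) (hπ : C.IsProjOnto ξ π) :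
    (∀ x y, C.Lam.Composable x y →
      (C.L 0).Composable (π x) (π y) ∧
        π (C.Lam.comp x y) = (C.L 0).comp (π x) (π y)) ∧
    (∀ v, C.Lam.IsVertex v → (C.L 0).IsVertex (π v)) ∧
    (∀ c ∈ Z2 (C.L 0) A, C.pfwd π c ∈ Z2 C.Lam A) ∧
    (∀ c c' : (C.L 0).M → (C.L 0).M → A,
      C.pfwd π (c + c') = C.pfwd π c + C.pfwd π c') := by
  have hF := C.isFunctor_proj hξ hπ
  exact ⟨fun _ _ h => ⟨hF.composable h, hF.map_comp h⟩, fun _ => hF.isVertex,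
    fun _ hc => hF.isCocycle2_comap hc, C.pfwd_add π⟩
end

section
/- Let Λ = lim(Λ_n, p_n) be the (k+1)-graph associated to a covering sequence of k-graphs, let A be an abelian group, and let c' ∈ Z²(Λ, A) satisfy c'(λ,μ) = 0 whenever λ ∈ Λ^{ℕe_{k+1}} or μ ∈ Λ^{ℕe_{k+1}}. Then for every n ≥ 1 and all composable λ, μ ∈ Λ_{n+1}, one has c'(λ,μ) = c'(p_n(λ), p_n(μ)). -/
open scoped BigOperators NNReal ENNReal

attribute [local instance] Classical.propDecidable

open KGraph

/-
The edges `e_v ∈ Λ^{e_{k+1}}` have degree in `ℕ e_{k+1}`, so `c'` vanishes against them and the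
cocycle identity lets an edge be absorbed into either argument of `c'`. Pushing edges through the
commuting squares `e_{r λ} λ = p_n(λ) e_{s λ}` and `e_{s λ} μ = p_n(μ) e_{s μ}` gives
`c'(λ, μ) = c'(e_{r λ} λ, μ) = c'(p_n λ, e_{s λ} μ) = c'(p_n λ, p_n(μ) e_{s μ}) = c'(p_n λ, p_n μ)`.
-/

namespace KGraph

variable {k : ℕ} {Λ : KGraph k} {A : Type*} [AddCommGroup A] {c : Λ.M → Λ.M → A}

theorem IsCocycle2.comp_left_eq (hc : Λ.IsCocycle2 c) {e x y : Λ.M}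
    (hex : Λ.Composable e x) (hxy : Λ.Composable x y) (he : ∀ z, c e z = 0) :
    c (Λ.comp e x) y = c x y := by
  simpa [he] using hc.2.2 e x y hex hxy

theorem IsCocycle2.comp_right_eq (hc : Λ.IsCocycle2 c) {x y g : Λ.M}
    (hxy : Λ.Composable x y) (hyg : Λ.Composable y g) (hg : ∀ z, c z g = 0) :
    c x (Λ.comp y g) = c x y := by
  simpa [hg] using (hc.2.2 x y g hxy hyg).symm

theorem IsCocycle2.comp_assoc_eq (hc : Λ.IsCocycle2 c) {x f y : Λ.M}
    (hxf : Λ.Composable x f) (hfy : Λ.Composable f y) (hx : c x f = 0) (hy : c f y = 0) :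
    c (Λ.comp x f) y = c x (Λ.comp f y) := by
  simpa [hx, hy] using hc.2.2 x f y hxf hfy

theorem IsCocycle2.eq_of_comp_eq_comp (hc : Λ.IsCocycle2 c) {x y a b e f g : Λ.M}
    (hxy : Λ.Composable x y) (hab : Λ.Composable a b) (hex : Λ.Composable e x)
    (haf : Λ.Composable a f) (hfy : Λ.Composable f y) (hbg : Λ.Composable b g)
    (hsq_x : Λ.comp e x = Λ.comp a f) (hsq_y : Λ.comp f y = Λ.comp b g)
    (he : ∀ z, c e z = 0) (hf : ∀ z, c f z = 0 ∧ c z f = 0) (hg : ∀ z, c z g = 0) :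
    c x y = c a b :=
  calc c x y = c (Λ.comp e x) y := (hc.comp_left_eq hex hxy he).symm
    _ = c (Λ.comp a f) y := by rw [hsq_x]
    _ = c a (Λ.comp f y) := hc.comp_assoc_eq haf hfy (hf a).2 (hf y).1
    _ = c a (Λ.comp b g) := by rw [hsq_y]
    _ = c a b := hc.comp_right_eq hab hbg hg

theorem IsKGraphCovering.map_composable {Γ : KGraph k} {p : Γ.M → Λ.M}
    (hp : IsKGraphCovering Γ Λ p) {x y : Γ.M} (hxy : Γ.Composable x y) :
    Λ.Composable (p x) (p y) := by
  obtain ⟨-, hsrc, hrng, -⟩ := hp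
  rw [Composable, hsrc, hrng, hxy]

end KGraph

namespace CovSeqLimit

variable {k : ℕ} (C : CovSeqLimit k)

theorem ι_composable {n : ℕ} {x y : (C.L n).M} (hxy : (C.L n).Composable x y) :
    C.Lam.Composable (C.ι n x) (C.ι n y) := by
  rw [Composable, C.ι_src, C.ι_rng, hxy]

theorem onlyLast_deg_edge {n : ℕ} {v : (C.L (n + 1)).M} (hv : (C.L (n + 1)).IsVertex v) :
    OnlyLast (C.Lam.deg (C.edge ⟨n, v⟩)) := by
  intro i
  simp [C.edge_deg ⟨n, v⟩ hv]

theorem edge_composable_ι {n : ℕ} (x : (C.L (n + 1)).M) :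
    C.Lam.Composable (C.edge ⟨n, (C.L (n + 1)).rng x⟩) (C.ι (n + 1) x) := by
  rw [Composable, C.edge_src n _ ((C.L (n + 1)).isVertex_rng x), C.ι_rng]

theorem ι_p_composable_edge {n : ℕ} (x : (C.L (n + 1)).M) :
    C.Lam.Composable (C.ι n (C.p n x)) (C.edge ⟨n, (C.L (n + 1)).src x⟩) := by
  rw [Composable, C.ι_src, C.edge_rng n _ ((C.L (n + 1)).isVertex_src x), (C.p_cov n).2.1]

end CovSeqLimit

open KGraph in
/-- If `c' ∈ Z²(Λ, A)` vanishes whenever either argument lies in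
`Λ^{ℕ e_{k+1}}`, then `c'(λ, μ) = c'(p_n λ, p_n μ)` for all composable
`λ, μ ∈ Λ_{n+1}`. -/
theorem cocycle_descends_along_coverings {k : ℕ} (C : CovSeqLimit k)
    (A : Type*) [AddCommGroup A]
    (c' : C.Lam.M → C.Lam.M → A) (hc' : c' ∈ Z2 C.Lam A)
    (hvanish : ∀ x y : C.Lam.M,
      CovSeqLimit.OnlyLast (C.Lam.deg x) ∨ CovSeqLimit.OnlyLast (C.Lam.deg y) →
        c' x y = 0) :
    ∀ (n : ℕ) (x y : (C.L (n + 1)).M), (C.L (n + 1)).Composable x y →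
      c' (C.ι (n + 1) x) (C.ι (n + 1) y) =
        c' (C.ι n (C.p n x)) (C.ι n (C.p n y)) := by
  intro n x y hxy
  have hedge : ∀ v, (C.L (n + 1)).IsVertex v → ∀ z,
      c' (C.edge ⟨n, v⟩) z = 0 ∧ c' z (C.edge ⟨n, v⟩) = 0 := fun v hv z =>
    ⟨hvanish _ _ (.inl (C.onlyLast_deg_edge hv)), hvanish _ _ (.inr (C.onlyLast_deg_edge hv))⟩
  have hyx : (C.L (n + 1)).rng y = (C.L (n + 1)).src x := hxy.symm
  exact (show C.Lam.IsCocycle2 c' from hc').eq_of_comp_eq_comp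
    (C.ι_composable hxy) (C.ι_composable ((C.p_cov n).map_composable hxy))
    (C.edge_composable_ι x) (C.ι_p_composable_edge x) (hyx ▸ C.edge_composable_ι y)
    (C.ι_p_composable_edge y) (C.edge_comm n x) (hyx ▸ C.edge_comm n y)
    (fun z => (hedge _ ((C.L (n + 1)).isVertex_rng x) z).1)
    (hedge _ ((C.L (n + 1)).isVertex_src x))
    (fun z => (hedge _ ((C.L (n + 1)).isVertex_src y) z).2)
end

section
/- Let Λ = lim(Λ_n, p_n) be the (k+1)-graph associated to a covering sequence of k-graphs, let A be an abelian group, and let c ∈ Z²(Λ, A). Then there exists a 1-cochain b : Λ → A such that c − δ¹b = π_*(c|_{Λ_1}). -/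
open scoped BigOperators NNReal ENNReal

attribute [local instance] Classical.propDecidable

open KGraph

/-!
Factor `ξ_{r λ} λ = π(λ) β(λ)` with `β(λ)` vertical and put `b(λ) = c(ξ_{r λ}, λ) - c(π λ, β λ)`.
Vertical paths down to `Λ₁` are determined by their source, so for composable `λ, μ` we get
`β(λ) = ξ_{r μ}`, `π(λμ) = π(λ)π(μ)` and `β(λμ) = β(μ)`; the two commuting squares
`ξ_{r λ} λ = π(λ) ξ_{r μ}` and `ξ_{r μ} μ = π(μ) β(μ)` then turn three instances of the cocycle
identity into `c(λ, μ) - δ¹b(λ, μ) = c(π λ, π μ)`.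
-/

namespace KGraph

variable {k : ℕ} (Λ : KGraph k)

theorem eq_of_comp_eq_comp {p₁ p₂ q₁ q₂ : Λ.M} (hp : Λ.Composable p₁ p₂)
    (hq : Λ.Composable q₁ q₂) (h : Λ.comp p₁ p₂ = Λ.comp q₁ q₂) (hdeg : Λ.deg p₁ = Λ.deg q₁) :
    p₁ = q₁ ∧ p₂ = q₂ := by
  have hdeg₂ : Λ.deg p₂ = Λ.deg q₂ := by
    have h' := congrArg Λ.deg h
    rw [Λ.deg_comp _ _ hp, Λ.deg_comp _ _ hq, hdeg] at h'
    exact add_left_cancel h'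
  obtain ⟨_, _, huniq⟩ := Λ.factor (Λ.comp p₁ p₂) _ _ (Λ.deg_comp _ _ hp)
  exact Prod.ext_iff.mp <| (huniq (p₁, p₂) ⟨hp, rfl, rfl, rfl⟩).trans
    (huniq (q₁, q₂) ⟨hq, h.symm, hdeg.symm, hdeg₂.symm⟩).symm

theorem rng_eq_self_and_src_eq_self_of_deg_eq_zero {x : Λ.M} (h : Λ.deg x = 0) :
    Λ.rng x = x ∧ Λ.src x = x := by
  obtain ⟨hrng, hsrc⟩ := Λ.eq_of_comp_eq_comp (Λ.src_rng x) (Λ.rng_src x).symm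
    ((Λ.id_comp x).trans (Λ.comp_id x).symm) ((Λ.deg_rng x).trans h.symm)
  exact ⟨hrng, hsrc.symm⟩

theorem paste_comp_eq {X x y P B Q D : Λ.M} (hXx : Λ.Composable X x) (hxy : Λ.Composable x y)
    (hPB : Λ.Composable P B) (hQD : Λ.Composable Q D)
    (h₁ : Λ.comp X x = Λ.comp P B) (h₂ : Λ.comp B y = Λ.comp Q D) :
    Λ.Composable B y ∧ Λ.Composable P Q ∧ Λ.comp X (Λ.comp x y) = Λ.comp (Λ.comp P Q) D := by
  have hBy : Λ.Composable B y := by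
    rw [Composable, ← Λ.src_comp P B hPB, ← h₁, Λ.src_comp X x hXx]
    exact hxy
  have hPQ : Λ.Composable P Q := by
    rw [Composable, hPB, ← Λ.rng_comp B y hBy, h₂, Λ.rng_comp Q D hQD]
  refine ⟨hBy, hPQ, ?_⟩
  rw [← Λ.comp_assoc X x y hXx hxy, h₁, Λ.comp_assoc P B y hPB hBy, h₂,
    Λ.comp_assoc P Q D hPQ hQD]

variable {Λ}

theorem IsCocycle2.apply_eq_of_comp_eq {A : Type*} [AddCommGroup A] {c : Λ.M → Λ.M → A}
    (hc : Λ.IsCocycle2 c) {X x y P B Q D : Λ.M} (hXx : Λ.Composable X x)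
    (hxy : Λ.Composable x y) (hPB : Λ.Composable P B) (hQD : Λ.Composable Q D)
    (h₁ : Λ.comp X x = Λ.comp P B) (h₂ : Λ.comp B y = Λ.comp Q D) :
    c x y - (c X x - c P B) - (c B y - c Q D) + (c X (Λ.comp x y) - c (Λ.comp P Q) D) =
      c P Q := by
  obtain ⟨hBy, hPQ, -⟩ := Λ.paste_comp_eq hXx hxy hPB hQD h₁ h₂
  have e₁ := hc.2.2 X x y hXx hxy
  have e₂ := hc.2.2 P B y hPB hBy
  have e₃ := hc.2.2 P Q D hPQ hQD
  rw [h₁] at e₁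
  rw [h₂] at e₂
  linear_combination (norm := abel) e₂ - e₁ - e₃

end KGraph

namespace CovSeqLimit

variable {k : ℕ} (C : CovSeqLimit k)

theorem deg_ι_last (n : ℕ) (x : (C.L n).M) : C.Lam.deg (C.ι n x) (Fin.last k) = 0 := by
  rw [C.ι_deg, Fin.snoc_last]

theorem eq_of_comp_eq_comp_of_onlyLast {p₁ p₂ q₁ q₂ : C.Lam.M}
    (hp : C.Lam.Composable p₁ p₂) (hq : C.Lam.Composable q₁ q₂)
    (h : C.Lam.comp p₁ p₂ = C.Lam.comp q₁ q₂)
    (hp₁ : C.Lam.deg p₁ (Fin.last k) = 0) (hq₁ : C.Lam.deg q₁ (Fin.last k) = 0)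
    (hp₂ : OnlyLast (C.Lam.deg p₂)) (hq₂ : OnlyLast (C.Lam.deg q₂)) :
    p₁ = q₁ ∧ p₂ = q₂ := by
  refine C.Lam.eq_of_comp_eq_comp hp hq h (funext fun i => ?_)
  induction i using Fin.lastCases with
  | last => rw [hp₁, hq₁]
  | cast i =>
    have h' := congrFun (congrArg C.Lam.deg h) i.castSucc
    rw [C.Lam.deg_comp _ _ hp, C.Lam.deg_comp _ _ hq, Pi.add_apply, Pi.add_apply,
      hp₂ i, hq₂ i] at h'
    exact h'

theorem exists_comp_edge_eq_of_onlyLast {α : C.Lam.M} (hα : OnlyLast (C.Lam.deg α))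
    (hpos : C.Lam.deg α (Fin.last k) ≠ 0) :
    ∃ γ n v, (C.L (n + 1)).IsVertex v ∧ C.Lam.Composable γ (C.edge ⟨n, v⟩) ∧
      C.Lam.comp γ (C.edge ⟨n, v⟩) = α ∧ OnlyLast (C.Lam.deg γ) := by
  obtain ⟨m, hm⟩ := Nat.exists_eq_succ_of_ne_zero hpos
  have hdeg : C.Lam.deg α = Fin.snoc (fun _ : Fin k => 0) m + Fin.snoc (fun _ => 0) 1 := by
    funext i
    induction i using Fin.lastCases with
    | last => simp [hm]
    | cast i => simp [hα i]
  obtain ⟨⟨γ, e⟩, ⟨hγe, rfl, hγ, he⟩, -⟩ := C.Lam.factor α _ _ hdeg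
  obtain ⟨⟨n, v⟩, hv, rfl⟩ := C.edge_surj e he
  exact ⟨γ, n, v, hv, hγe, rfl, fun i => by simp [hγ]⟩

theorem deg_eq_zero_of_onlyLast_of_src_eq_ι_zero {α : C.Lam.M} (hα : OnlyLast (C.Lam.deg α))
    {u : (C.L 0).M} (hsrc : C.Lam.src α = C.ι 0 u) : C.Lam.deg α = 0 := by
  funext i
  induction i using Fin.lastCases with
  | cast i => exact hα i
  | last =>
    by_contra hpos
    obtain ⟨γ, n, v, hv, hγe, rfl, -⟩ := C.exists_comp_edge_eq_of_onlyLast hα hpos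
    rw [C.Lam.src_comp _ _ hγe, C.edge_src n v hv] at hsrc
    exact n.succ_ne_zero (C.ι_disjoint _ _ _ _ hsrc)

theorem exists_comp_edge_eq_of_src_eq_ι_succ {α : C.Lam.M} (hα : OnlyLast (C.Lam.deg α))
    {w : (C.L 0).M} (hrng : C.Lam.rng α = C.ι 0 w) {n : ℕ} {u : (C.L (n + 1)).M}
    (hsrc : C.Lam.src α = C.ι (n + 1) u) :
    ∃ γ, OnlyLast (C.Lam.deg γ) ∧ C.Lam.rng γ = C.ι 0 w ∧ C.Lam.src γ = C.ι n (C.p n u) ∧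
      C.Lam.Composable γ (C.edge ⟨n, u⟩) ∧ C.Lam.comp γ (C.edge ⟨n, u⟩) = α := by
  have hpos : C.Lam.deg α (Fin.last k) ≠ 0 := by
    intro h0
    obtain ⟨hα_rng, hα_src⟩ := C.Lam.rng_eq_self_and_src_eq_self_of_deg_eq_zero
      (funext <| Fin.lastCases h0 hα)
    rw [hα_rng] at hrng
    rw [hα_src, hrng] at hsrc
    exact n.succ_ne_zero (C.ι_disjoint _ _ _ _ hsrc).symm
  obtain ⟨γ, n', v, hv, hγe, rfl, hγ⟩ := C.exists_comp_edge_eq_of_onlyLast hα hpos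
  rw [C.Lam.src_comp _ _ hγe, C.edge_src n' v hv] at hsrc
  obtain rfl : n' = n := Nat.succ_injective (C.ι_disjoint _ _ _ _ hsrc)
  obtain rfl : v = u := C.ι_inj _ hsrc
  refine ⟨γ, hγ, ?_, ?_, hγe, rfl⟩
  · rwa [C.Lam.rng_comp _ _ hγe] at hrng
  · rw [hγe, C.edge_rng n' v hv]

/-- A vertex `v` lies in some `Λ_{n+1}`, and a vertical path from `v` down to `Λ₁` is forced to
be the composite of the edges `e(v), e(p_n v), …`. -/
theorem eq_of_onlyLast_of_src_eq_s8 {α α' : C.Lam.M} (hα : OnlyLast (C.Lam.deg α))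
    (hα' : OnlyLast (C.Lam.deg α')) (hsrc : C.Lam.src α = C.Lam.src α')
    {w w' : (C.L 0).M} (hrng : C.Lam.rng α = C.ι 0 w) (hrng' : C.Lam.rng α' = C.ι 0 w') :
    α = α' := by
  obtain ⟨n, u, hu⟩ := C.ι_union (C.Lam.src α) (by rw [C.Lam.deg_src]; rfl)
  induction n generalizing α α' with
  | zero =>
    rw [← (C.Lam.rng_eq_self_and_src_eq_self_of_deg_eq_zero
        (C.deg_eq_zero_of_onlyLast_of_src_eq_ι_zero hα hu.symm)).2,
      ← (C.Lam.rng_eq_self_and_src_eq_self_of_deg_eq_zero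
        (C.deg_eq_zero_of_onlyLast_of_src_eq_ι_zero hα' (hsrc ▸ hu.symm))).2, hsrc]
  | succ n ih =>
    obtain ⟨γ, hγ, hγ_rng, hγ_src, -, rfl⟩ :=
      C.exists_comp_edge_eq_of_src_eq_ι_succ hα hrng hu.symm
    obtain ⟨γ', hγ', hγ'_rng, hγ'_src, -, rfl⟩ :=
      C.exists_comp_edge_eq_of_src_eq_ι_succ hα' hrng' (hsrc ▸ hu.symm)
    rw [ih hγ hγ' (hγ_src.trans hγ'_src.symm) hγ_rng hγ'_rng (C.p n u) hγ_src.symm]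

def IsVerticalCofactor (ξ : C.Lam.M → C.Lam.M) (π : C.Lam.M → (C.L 0).M)
    (β : C.Lam.M → C.Lam.M) : Prop :=
  ∀ x, OnlyLast (C.Lam.deg (β x)) ∧ C.Lam.Composable (C.ι 0 (π x)) (β x) ∧
    C.Lam.comp (ξ (C.Lam.rng x)) x = C.Lam.comp (C.ι 0 (π x)) (β x)

variable {C} {ξ : C.Lam.M → C.Lam.M} {π : C.Lam.M → (C.L 0).M} {β : C.Lam.M → C.Lam.M}

theorem IsXi.composable (hξ : C.IsXi ξ) (x : C.Lam.M) :
    C.Lam.Composable (ξ (C.Lam.rng x)) x :=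
  (hξ _ (C.Lam.isVertex_rng x)).1

theorem IsVerticalCofactor.src_eq (hξ : C.IsXi ξ) (hβ : C.IsVerticalCofactor ξ π β)
    (x : C.Lam.M) : C.Lam.src (β x) = C.Lam.src x := by
  rw [← C.Lam.src_comp _ _ (hβ x).2.1, ← (hβ x).2.2, C.Lam.src_comp _ _ (hξ.composable x)]

theorem IsVerticalCofactor.eq_xi (hξ : C.IsXi ξ) (hβ : C.IsVerticalCofactor ξ π β)
    {x y : C.Lam.M} (hxy : C.Lam.Composable x y) : β x = ξ (C.Lam.rng y) := by
  obtain ⟨hξ_src, hξ_vert, w, -, hξ_rng⟩ := hξ _ (C.Lam.isVertex_rng y)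
  have hβ_rng : C.Lam.rng (β x) = C.ι 0 ((C.L 0).src (π x)) := by
    rw [← (hβ x).2.1, C.ι_src]
  refine C.eq_of_onlyLast_of_src_eq_s8 (hβ x).1 hξ_vert ?_ hβ_rng hξ_rng
  rw [hβ.src_eq hξ, hξ_src]
  exact hxy

theorem IsVerticalCofactor.map_comp (hξ : C.IsXi ξ) (hβ : C.IsVerticalCofactor ξ π β)
    {x y : C.Lam.M} (hxy : C.Lam.Composable x y) :
    C.ι 0 (π (C.Lam.comp x y)) = C.Lam.comp (C.ι 0 (π x)) (C.ι 0 (π y)) ∧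
      β (C.Lam.comp x y) = β y := by
  have h₂ := (hβ y).2.2
  rw [← hβ.eq_xi hξ hxy] at h₂
  obtain ⟨-, hPQ, hpaste⟩ :=
    C.Lam.paste_comp_eq (hξ.composable x) hxy (hβ x).2.1 (hβ y).2.1 (hβ x).2.2 h₂
  have hxy_eq := (hβ (C.Lam.comp x y)).2.2
  rw [C.Lam.rng_comp x y hxy, hpaste] at hxy_eq
  refine C.eq_of_comp_eq_comp_of_onlyLast (hβ _).2.1 ?_ hxy_eq.symm (C.deg_ι_last 0 _) ?_
    (hβ _).1 (hβ y).1
  · rw [KGraph.Composable, C.Lam.src_comp _ _ hPQ]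
    exact (hβ y).2.1
  · rw [C.Lam.deg_comp _ _ hPQ, Pi.add_apply, C.deg_ι_last, C.deg_ι_last]

theorem IsVerticalCofactor.isVertex_proj (hξ : C.IsXi ξ) (hβ : C.IsVerticalCofactor ξ π β)
    {v : C.Lam.M} (hv : C.Lam.IsVertex v) : C.Lam.IsVertex (C.ι 0 (π v)) := by
  obtain ⟨hξ_src, hξ_vert, w, -, hξ_rng⟩ := hξ v hv
  have hξv : C.Lam.comp (ξ v) v = ξ v := by
    have h := C.Lam.comp_id (ξ v)
    rwa [hξ_src] at h
  have h := (hβ v).2.2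
  rw [hv, hξv, ← C.Lam.id_comp (ξ v)] at h
  obtain ⟨hP, -⟩ := C.eq_of_comp_eq_comp_of_onlyLast (C.Lam.src_rng _) (hβ v).2.1 h
    (by rw [hξ_rng, C.deg_ι_last]) (C.deg_ι_last 0 _) hξ_vert (hβ v).1
  rw [← hP]
  exact C.Lam.isVertex_rng _

end CovSeqLimit

open KGraph in
/-- For every `c ∈ Z²(Λ, A)` there is a `1`-cochain `b` on `Λ` with
`c − δ¹b = π_*(c|_{Λ₁})`. -/
theorem cocycle_cohomologous_to_pullback {k : ℕ} (C : CovSeqLimit k)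
    (A : Type*) [AddCommGroup A]
    (c : C.Lam.M → C.Lam.M → A) (hc : c ∈ Z2 C.Lam A)
    (ξ : C.Lam.M → C.Lam.M) (hξ : C.IsXi ξ)
    (π : C.Lam.M → (C.L 0).M) (hπ : C.IsProjOnto ξ π) :
    ∃ b : C.Lam.M → A, C.Lam.IsCochain1 b ∧
      c - C.Lam.delta1 b = C.pfwd π (C.res c) := by
  replace hc : C.Lam.IsCocycle2 c := hc
  choose β hβ using hπ
  replace hβ : C.IsVerticalCofactor ξ π β := hβ
  refine ⟨fun x => c (ξ (C.Lam.rng x)) x - c (C.ι 0 (π x)) (β x), fun v hv => ?_, ?_⟩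
  · dsimp only
    rw [hc.2.1 _ v (Or.inr hv), hc.2.1 _ _ (Or.inl (hβ.isVertex_proj hξ hv)), sub_zero]
  funext x y
  simp only [Pi.sub_apply, delta1, CovSeqLimit.pfwd, CovSeqLimit.res]
  split_ifs with hxy
  · obtain ⟨hπ_comp, hβ_comp⟩ := hβ.map_comp hξ hxy
    obtain ⟨-, hPB, h₁⟩ := hβ x
    rw [hβ.eq_xi hξ hxy] at hPB h₁ ⊢
    rw [C.Lam.rng_comp x y hxy, hπ_comp, hβ_comp]
    convert hc.apply_eq_of_comp_eq (hξ.composable x) hxy hPB (hβ y).2.1 h₁ (hβ y).2.2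
      using 1
    abel
  · rw [hc.1 x y hxy, sub_zero]
end
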